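/- For every ξ ∈ L*, the upper α-Hölder derivative of F_ψ at ξ is infinite: limsup_{η→ξ, η≠ξ} |F_ψ(ξ) − F_ψ(η)|/|ξ − η|^α = ∞. -/

import Mathlib

open Set Filter MeasureTheory Topology
open scoped ENNReal NNReal

noncomputable section

/-- A conformal iterated function system on a compact interval `X = [x₀, x₁] ⊂ ℝ`:
finitely many (`d + 1`, with `d ≥ 1`) differentiable contractions mapping `X` into its
interior, satisfying the Hölder condition (each `f a` extends to a `C^{1+ε}`
diffeomorphism of an open interval `Y = (y₀, y₁) ⊃ X` onto its image, with `f a '' Y ⊆ Y`)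
and the strong separation condition. -/
structure CIFS where
  d : ℕ
  one_le_d : 1 ≤ d
  x₀ : ℝ
  x₁ : ℝ
  x_lt : x₀ < x₁
  y₀ : ℝ
  y₁ : ℝ
  y₀_lt : y₀ < x₀
  y₁_gt : x₁ < y₁
  f : Fin (d + 1) → ℝ → ℝ
  maps_X : ∀ a, MapsTo (f a) (Icc x₀ x₁) (Ioo x₀ x₁)
  r : ℝ
  r_pos : 0 < r
  r_lt_one : r < 1
  contr : ∀ a, ∀ u ∈ Icc x₀ x₁, ∀ v ∈ Icc x₀ x₁, |f a u - f a v| ≤ r * |u - v|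
  maps_Y : ∀ a, MapsTo (f a) (Ioo y₀ y₁) (Ioo y₀ y₁)
  injOn_Y : ∀ a, InjOn (f a) (Ioo y₀ y₁)
  diff_Y : ∀ a, ∀ x ∈ Ioo y₀ y₁, DifferentiableAt ℝ (f a) x
  deriv_ne : ∀ a, ∀ x ∈ Ioo y₀ y₁, deriv (f a) x ≠ 0
  ε : NNReal
  ε_pos : 0 < ε
  ε_le_one : ε ≤ 1
  hc : NNReal
  holder : ∀ a, HolderOnWith hc ε (deriv (f a)) (Ioo y₀ y₁)
  sep : ∀ a b, a ≠ b → Disjoint (f a '' Icc x₀ x₁) (f b '' Icc x₀ x₁)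

namespace CIFS

/-- the compact interval `X`. -/
def X (S : CIFS) : Set ℝ := Icc S.x₀ S.x₁

/-- `fw ω = f_{x₁} ∘ ⋯ ∘ f_{x_n}` for the word `ω = x₁…x_n`. -/
def fw (S : CIFS) : List (Fin (S.d + 1)) → ℝ → ℝ
  | [] => id
  | a :: ω => S.f a ∘ fw S ω

/-- the limit set `L = ⋂ n ⋃_{|ω| = n} f_ω(X)`. -/
def L (S : CIFS) : Set ℝ :=
  ⋂ n : ℕ, ⋃ ω ∈ {ω : List (Fin (S.d + 1)) | ω.length = n}, S.fw ω '' S.X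

/-- the initial word `x₁…x_n` of a code `x = (x₁x₂…)` (here `x j` is the letter `x_{j+1}`). -/
def code (S : CIFS) (x : ℕ → Fin (S.d + 1)) (n : ℕ) : List (Fin (S.d + 1)) :=
  (List.range n).map x

/-- the coding map `Φ`: sends a code `x` to the unique point of `⋂ n, f_{x₁…x_n}(X)`
(this intersection is a singleton, so we may take its supremum). -/
def Φ (S : CIFS) (x : ℕ → Fin (S.d + 1)) : ℝ :=
  sSup (⋂ n : ℕ, S.fw (S.code x n) '' S.X)

/-- the cylinder set `[ω] ⊆ L` of a word `ω`. -/
def cyl (S : CIFS) (ω : List (Fin (S.d + 1))) : Set ℝ :=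
  S.Φ '' {x | S.code x ω.length = ω}

/-- the left shift on code space. -/
def shift (S : CIFS) (x : ℕ → Fin (S.d + 1)) : ℕ → Fin (S.d + 1) := fun n => x (n + 1)

/-- the Birkhoff sum `S_n g (ξ)` of `g : L → ℝ` evaluated at the point `ξ` with code `x`. -/
def birk (S : CIFS) (g : ℝ → ℝ) (n : ℕ) (x : ℕ → Fin (S.d + 1)) : ℝ :=
  ∑ k ∈ Finset.range n, g (S.Φ fun j => x (j + k))

/-- the code of a point of `L` (a choice of inverse of the coding map `Φ`). -/
def codeOf (S : CIFS) (ξ : ℝ) : ℕ → Fin (S.d + 1) := Function.invFun S.Φ ξ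

/-- the geometric potential `φ(ξ) = log |f'_{x₁}(Φ(σξ))|` for `ξ = (x₁x₂…) ∈ L`. -/
def geom (S : CIFS) : ℝ → ℝ := fun ξ =>
  Real.log |deriv (S.f (S.codeOf ξ 0)) (S.Φ (S.shift (S.codeOf ξ)))|

/-- the `n`-th approximant `(1/n) log Σ_{|ω| = n} exp (sup_{ξ ∈ [ω]} S_n g(ξ))`
of the topological pressure. -/
def presSeq (S : CIFS) (g : ℝ → ℝ) (n : ℕ) : ℝ :=
  Real.log (∑ ω : Fin n → Fin (S.d + 1),
      Real.exp (sSup (S.birk g n '' {x : ℕ → Fin (S.d + 1) | ∀ i : Fin n, x i.1 = ω i}))) / n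

/-- `P(g) = p` : the defining limit of the topological pressure exists and equals `p`. -/
def HasPressure (S : CIFS) (g : ℝ → ℝ) (p : ℝ) : Prop :=
  Tendsto (S.presSeq g) atTop (nhds p)

/-- Hölder continuity on the limit set. -/
def HolderOn (S : CIFS) (g : ℝ → ℝ) : Prop :=
  ∃ c e : NNReal, 0 < e ∧ HolderOnWith c e g S.L

/-- the standing assumptions on the potential `ψ` (for the exponent `α`):
`ψ` is Hölder continuous, `ψ < 0`, `P(ψ) = 0` and `ψ > αφ` on `L`. -/
def GoodPotential (S : CIFS) (α : ℝ) (ψ : ℝ → ℝ) : Prop :=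
  S.HolderOn ψ ∧ (∀ ξ ∈ S.L, ψ ξ < 0) ∧ S.HasPressure ψ 0 ∧
    ∀ ξ ∈ S.L, α * S.geom ξ < ψ ξ

/-- the Gibbs property of the measure `ν` for the potential `ψ`. -/
def IsGibbs (S : CIFS) (ψ : ℝ → ℝ) (ν : Measure ℝ) : Prop :=
  ∃ c : ℝ, 1 ≤ c ∧ ∀ n : ℕ, ∀ x : ℕ → Fin (S.d + 1),
    c⁻¹ * Real.exp (S.birk ψ n x) ≤ (ν (S.cyl (S.code x n))).toReal ∧
      (ν (S.cyl (S.code x n))).toReal ≤ c * Real.exp (S.birk ψ n x)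

/-- the set `E` of codes which are eventually constant equal to `0` or to `1`;
`L* = L \ Φ(E)`. -/
def Ecode (S : CIFS) : Set (ℕ → Fin (S.d + 1)) :=
  {x | ∃ i : Fin (S.d + 1), (i = 0 ∨ i = 1) ∧ ∃ n : ℕ, ∀ k ≥ n, x k = i}

/-- the code `x` has an `i`-block of length `k` at the `n`-th level:
`x_n ≠ i`, `x_{n+k+1} ≠ i` and `x_{n+m} = i` for `1 ≤ m ≤ k`
(recall `x j` is the letter `x_{j+1}`). -/
def HasBlock (S : CIFS) (x : ℕ → Fin (S.d + 1)) (i : Fin (S.d + 1)) (k n : ℕ) : Prop :=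
  x (n - 1) ≠ i ∧ x (n + k) ≠ i ∧ ∀ m : ℕ, 1 ≤ m → m ≤ k → x (n + m - 1) = i

/-- the labelling convention: `f 0 (X)` is the leftmost and `f 1 (X)` the rightmost
interval of the first level. -/
def Labeled (S : CIFS) : Prop :=
  (∀ a : Fin (S.d + 1), a ≠ 0 → ∀ u ∈ S.f 0 '' S.X, ∀ v ∈ S.f a '' S.X, u < v) ∧
  (∀ a : Fin (S.d + 1), a ≠ 1 → ∀ u ∈ S.f 1 '' S.X, ∀ v ∈ S.f a '' S.X, v < u)

end CIFS

/-- the distribution function `F(t) = ν((-∞, t])` of a measure `ν`. -/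
def distFun (ν : Measure ℝ) : ℝ → ℝ := fun t => (ν (Iic t)).toReal

/-- the `α`-Hölder difference quotient `|F(ξ) - F(η)| / |ξ - η|^α`. -/
def hquot (F : ℝ → ℝ) (α ξ η : ℝ) : ℝ := |F ξ - F η| / |ξ - η| ^ α

/-- the `α`-Hölder derivative of `F` at `ξ` exists in `[0,∞]` and equals `ℓ`. -/
def HolderDerivAt (F : ℝ → ℝ) (α ξ : ℝ) (ℓ : ℝ≥0∞) : Prop :=
  Tendsto (fun η => ENNReal.ofReal (hquot F α ξ η)) (nhdsWithin ξ {ξ}ᶜ) (nhds ℓ)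

/-- the set `Λ_ψ^α` of points of `L` where the `α`-Hölder derivative of the
distribution function of the Gibbs measure `ν = ν_ψ` does not exist in `[0,∞]`. -/
def CIFS.Lambda (S : CIFS) (ψ : ℝ → ℝ) (α : ℝ) (ν : Measure ℝ) : Set ℝ :=
  {ξ ∈ S.L | ¬∃ ℓ : ℝ≥0∞, HolderDerivAt (distFun ν) α ξ ℓ}

/-! Fix `ξ = Φ x` and a level `n`. One of the two endpoints `η` of the interval
`f_{x₁…x_n}(X) ∋ ξ` lies on a side of `ξ` carrying at least half of the Gibbs mass of the
cylinder `[x₁…x_n]`, so `|F(ξ) - F(η)| ≳ e^{S_n ψ(ξ)}`, while bounded distortion gives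
`|ξ - η| ≲ e^{S_n φ(ξ)}`. Hence the `α`-Hölder quotient at `η` is `≳ e^{S_n (ψ - αφ)(ξ)} ≥ e^{n δ}`,
where `δ > 0` is the minimum of `ψ - αφ` over the compact code space, and `η → ξ` as `n → ∞`. -/

lemma measureReal_Ioc_eq_distFun_sub (ν : Measure ℝ) [IsFiniteMeasure ν] {a b : ℝ}
    (hab : a ≤ b) : ν.real (Ioc a b) = distFun ν b - distFun ν a := by
  rw [distFun, distFun, ← Iic_union_Ioc_eq_Iic hab,
    measure_union (Iic_disjoint_Ioc le_rfl) measurableSet_Ioc,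
    ENNReal.toReal_add (measure_ne_top _ _) (measure_ne_top _ _), add_sub_cancel_left]
  rfl

lemma exists_half_measureReal_le_abs_distFun_sub (ν : Measure ℝ) [IsFiniteMeasure ν]
    {p q ξ : ℝ} (hξ : ξ ∈ uIoo p q) :
    ∃ η ∈ ({p, q} : Set ℝ), η ≠ ξ ∧ ν.real (uIoo p q) / 2 ≤ |distFun ν ξ - distFun ν η| := by
  wlog hpq : p ≤ q generalizing p q
  · obtain ⟨η, hη, h⟩ := this (uIoo_comm p q ▸ hξ) (le_of_not_ge hpq)
    exact ⟨η, pair_comm p q ▸ hη, uIoo_comm p q ▸ h⟩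
  rw [uIoo_of_le hpq] at hξ ⊢
  have hmass : ν.real (Ioo p q) ≤ distFun ν q - distFun ν p :=
    measureReal_Ioc_eq_distFun_sub ν hpq ▸ measureReal_mono Ioo_subset_Ioc_self
  by_cases hleft : ν.real (Ioo p q) / 2 ≤ distFun ν ξ - distFun ν p
  · exact ⟨p, mem_insert _ _, hξ.1.ne, hleft.trans (le_abs_self _)⟩
  · refine ⟨q, mem_insert_of_mem _ rfl, hξ.2.ne', ?_⟩
    rw [abs_sub_comm]
    exact le_trans (by linarith) (le_abs_self _)

lemma div_rpow_le_hquot {F : ℝ → ℝ} {α ξ η M D : ℝ} (hM : M ≤ |F ξ - F η|) (hne : η ≠ ξ)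
    (hD : |ξ - η| ≤ D) (hα : 0 ≤ α) : M / D ^ α ≤ hquot F α ξ η :=
  div_le_div₀ (abs_nonneg _) hM (Real.rpow_pos_of_pos (abs_pos.2 (sub_ne_zero.2 hne.symm)) α)
    (Real.rpow_le_rpow (abs_nonneg _) hD hα)

lemma limsup_eq_top_of_tendsto {β : Type*} {l : Filter β} {u : β → ℝ≥0∞} {η : ℕ → β}
    (hη : Tendsto η atTop l) (hu : Tendsto (u ∘ η) atTop (𝓝 ⊤)) : limsup u l = ⊤ :=
  top_unique (hu.limsup_eq ▸ hη.limsup_comp_le_limsup)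

namespace CIFS

variable (S : CIFS)

lemma X_subset_Ioo : S.X ⊆ Ioo S.y₀ S.y₁ := fun _ ht =>
  ⟨S.y₀_lt.trans_le ht.1, ht.2.trans_lt S.y₁_gt⟩

lemma left_mem_X : S.x₀ ∈ S.X := left_mem_Icc.2 S.x_lt.le

lemma right_mem_X : S.x₁ ∈ S.X := right_mem_Icc.2 S.x_lt.le

lemma abs_sub_le_of_mem_X {u v : ℝ} (hu : u ∈ S.X) (hv : v ∈ S.X) :
    |u - v| ≤ S.x₁ - S.x₀ := by
  simp only [X, mem_Icc] at hu hv
  exact abs_sub_le_iff.2 ⟨by linarith, by linarith⟩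

lemma continuousOn_f (a : Fin (S.d + 1)) : ContinuousOn (S.f a) S.X := fun t ht =>
  (S.diff_Y a t (S.X_subset_Ioo ht)).continuousAt.continuousWithinAt

lemma mapsTo_f (a : Fin (S.d + 1)) : MapsTo (S.f a) S.X S.X :=
  (S.maps_X a).mono_right Ioo_subset_Icc_self

lemma fw_cons (a : Fin (S.d + 1)) (ω : List (Fin (S.d + 1))) :
    S.fw (a :: ω) = S.f a ∘ S.fw ω := rfl

lemma mapsTo_fw (ω : List (Fin (S.d + 1))) : MapsTo (S.fw ω) S.X S.X := by
  induction ω with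
  | nil => exact mapsTo_id _
  | cons a ω ih => exact (S.mapsTo_f a).comp ih

lemma abs_fw_sub_le (ω : List (Fin (S.d + 1))) {u v : ℝ} (hu : u ∈ S.X) (hv : v ∈ S.X) :
    |S.fw ω u - S.fw ω v| ≤ S.r ^ ω.length * |u - v| := by
  induction ω with
  | nil => simp [fw]
  | cons a ω ih =>
    calc |S.f a (S.fw ω u) - S.f a (S.fw ω v)| ≤ S.r * |S.fw ω u - S.fw ω v| :=
          S.contr a _ (S.mapsTo_fw ω hu) _ (S.mapsTo_fw ω hv)
      _ ≤ S.r * (S.r ^ ω.length * |u - v|) := by gcongr; exact S.r_pos.le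
      _ = S.r ^ (a :: ω).length * |u - v| := by rw [List.length_cons, pow_succ]; ring

lemma injOn_fw (ω : List (Fin (S.d + 1))) : InjOn (S.fw ω) S.X := by
  induction ω with
  | nil => exact injOn_id _
  | cons a ω ih =>
    exact (S.injOn_Y a).comp ih ((S.mapsTo_fw ω).mono_right S.X_subset_Ioo)

lemma continuousOn_fw (ω : List (Fin (S.d + 1))) : ContinuousOn (S.fw ω) S.X := by
  induction ω with
  | nil => exact continuousOn_id
  | cons a ω ih => exact (S.continuousOn_f a).comp ih (S.mapsTo_fw ω)

lemma fw_mem_uIoo (ω : List (Fin (S.d + 1))) {t : ℝ} (ht : t ∈ Ioo S.x₀ S.x₁) :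
    S.fw ω t ∈ uIoo (S.fw ω S.x₀) (S.fw ω S.x₁) := by
  have htX : t ∈ S.X := Ioo_subset_Icc_self ht
  rcases (S.continuousOn_fw ω).strictMonoOn_of_injOn_Icc' S.x_lt.le (S.injOn_fw ω) with h | h
  · exact mem_uIoo_of_lt (h S.left_mem_X htX ht.1) (h htX S.right_mem_X ht.2)
  · exact mem_uIoo_of_gt (h htX S.right_mem_X ht.2) (h S.left_mem_X htX ht.1)

lemma code_cons (x : ℕ → Fin (S.d + 1)) (n : ℕ) :
    S.code x (n + 1) = x 0 :: S.code (S.shift x) n := by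
  simp [code, List.range_succ_eq_map, shift, List.map_map, Function.comp_def]

lemma length_code (x : ℕ → Fin (S.d + 1)) (n : ℕ) : (S.code x n).length = n := by
  simp [code]

def cylImage (x : ℕ → Fin (S.d + 1)) (n : ℕ) : Set ℝ := S.fw (S.code x n) '' S.X

lemma cylImage_zero (x : ℕ → Fin (S.d + 1)) : S.cylImage x 0 = S.X := image_id _

lemma cylImage_succ (x : ℕ → Fin (S.d + 1)) (n : ℕ) :
    S.cylImage x (n + 1) = S.f (x 0) '' S.cylImage (S.shift x) n := by
  rw [cylImage, cylImage, code_cons, fw_cons, image_comp]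

lemma cylImage_subset_X (x : ℕ → Fin (S.d + 1)) (n : ℕ) : S.cylImage x n ⊆ S.X :=
  (S.mapsTo_fw _).image_subset

lemma cylImage_succ_subset (x : ℕ → Fin (S.d + 1)) (n : ℕ) :
    S.cylImage x (n + 1) ⊆ S.cylImage x n := by
  induction n generalizing x with
  | zero =>
    rw [cylImage_succ, cylImage_zero, cylImage_zero]
    exact (S.mapsTo_f _).image_subset
  | succ n ih => rw [cylImage_succ, S.cylImage_succ x n]; exact image_mono (ih _)

lemma isCompact_cylImage (x : ℕ → Fin (S.d + 1)) (n : ℕ) : IsCompact (S.cylImage x n) :=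
  isCompact_Icc.image_of_continuousOn (S.continuousOn_fw _)

lemma abs_sub_le_of_mem_cylImage {x : ℕ → Fin (S.d + 1)} {n : ℕ} {u v : ℝ}
    (hu : u ∈ S.cylImage x n) (hv : v ∈ S.cylImage x n) :
    |u - v| ≤ S.r ^ n * (S.x₁ - S.x₀) := by
  obtain ⟨s, hs, rfl⟩ := hu
  obtain ⟨t, ht, rfl⟩ := hv
  calc _ ≤ S.r ^ (S.code x n).length * |s - t| := S.abs_fw_sub_le _ hs ht
    _ ≤ S.r ^ n * (S.x₁ - S.x₀) := by
      rw [S.length_code]; gcongr; exacts [pow_nonneg S.r_pos.le n, S.abs_sub_le_of_mem_X hs ht]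

lemma tendsto_r_pow_mul_sub_nhds_zero :
    Tendsto (fun n : ℕ => S.r ^ n * (S.x₁ - S.x₀)) atTop (𝓝 0) := by
  simpa using (tendsto_pow_atTop_nhds_zero_of_lt_one S.r_pos.le S.r_lt_one).mul_const
    (S.x₁ - S.x₀)

lemma Phi_mem_cylImage (x : ℕ → Fin (S.d + 1)) (n : ℕ) : S.Φ x ∈ S.cylImage x n := by
  have hne : (⋂ n, S.cylImage x n).Nonempty :=
    IsCompact.nonempty_iInter_of_sequence_nonempty_isCompact_isClosed _
      (S.cylImage_succ_subset x) (fun n => (nonempty_Icc.2 S.x_lt.le).image _)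
      (S.isCompact_cylImage x 0) (fun n => (S.isCompact_cylImage x n).isClosed)
  have hcpt : IsCompact (⋂ n, S.cylImage x n) :=
    (S.isCompact_cylImage x 0).of_isClosed_subset
      (isClosed_iInter fun n => (S.isCompact_cylImage x n).isClosed) (iInter_subset _ 0)
  exact mem_iInter.1 (hcpt.sSup_mem hne) n

lemma Phi_mem_L (x : ℕ → Fin (S.d + 1)) : S.Φ x ∈ S.L :=
  mem_iInter.2 fun n => mem_biUnion (S.length_code x n) (S.Phi_mem_cylImage x n)

lemma tendsto_of_mem_cylImage {x : ℕ → Fin (S.d + 1)} {η : ℕ → ℝ}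
    (hη : ∀ n, η n ∈ S.cylImage x n) : Tendsto η atTop (𝓝 (S.Φ x)) := by
  rw [tendsto_iff_dist_tendsto_zero]
  exact squeeze_zero (fun _ => dist_nonneg)
    (fun n => S.abs_sub_le_of_mem_cylImage (hη n) (S.Phi_mem_cylImage x n))
    S.tendsto_r_pow_mul_sub_nhds_zero

lemma Phi_eq_f_Phi_shift (x : ℕ → Fin (S.d + 1)) : S.Φ x = S.f (x 0) (S.Φ (S.shift x)) := by
  have hmem : ∀ n, S.f (x 0) (S.Φ (S.shift x)) ∈ S.cylImage x n := fun n =>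
    S.cylImage_succ_subset x n <| by
      rw [cylImage_succ]; exact mem_image_of_mem _ (S.Phi_mem_cylImage _ n)
  exact tendsto_nhds_unique (S.tendsto_of_mem_cylImage (η := fun _ => _) hmem) tendsto_const_nhds

lemma Phi_mem_Ioo (x : ℕ → Fin (S.d + 1)) : S.Φ x ∈ Ioo S.x₀ S.x₁ := by
  rw [Phi_eq_f_Phi_shift]; exact S.maps_X _ (S.cylImage_subset_X _ 0 (S.Phi_mem_cylImage _ 0))

lemma Phi_mem_X (x : ℕ → Fin (S.d + 1)) : S.Φ x ∈ S.X := Ioo_subset_Icc_self (S.Phi_mem_Ioo x)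

lemma Phi_eq_fw_code (x : ℕ → Fin (S.d + 1)) (n : ℕ) :
    S.Φ x = S.fw (S.code x n) (S.Φ fun j => x (j + n)) := by
  induction n generalizing x with
  | zero => rfl
  | succ n ih =>
    rw [code_cons, fw_cons, Function.comp_apply, S.Phi_eq_f_Phi_shift x, ih (S.shift x)]
    rfl

lemma Phi_mem_uIoo (x : ℕ → Fin (S.d + 1)) (n : ℕ) :
    S.Φ x ∈ uIoo (S.fw (S.code x n) S.x₀) (S.fw (S.code x n) S.x₁) := by
  rw [S.Phi_eq_fw_code x n]; exact S.fw_mem_uIoo _ (S.Phi_mem_Ioo _)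

lemma cyl_code_subset_uIoo (x : ℕ → Fin (S.d + 1)) (n : ℕ) :
    S.cyl (S.code x n) ⊆ uIoo (S.fw (S.code x n) S.x₀) (S.fw (S.code x n) S.x₁) := by
  rintro - ⟨y, hy, rfl⟩
  rw [mem_ofPred_eq, S.length_code] at hy
  rw [← hy]; exact S.Phi_mem_uIoo y n

lemma head_eq_and_Phi_shift_eq {x y : ℕ → Fin (S.d + 1)} (h : S.Φ x = S.Φ y) :
    x 0 = y 0 ∧ S.Φ (S.shift x) = S.Φ (S.shift y) := by
  rw [Phi_eq_f_Phi_shift, S.Phi_eq_f_Phi_shift y] at h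
  have hx := mem_image_of_mem (S.f (x 0)) (S.Phi_mem_X (S.shift x))
  have hy := mem_image_of_mem (S.f (y 0)) (S.Phi_mem_X (S.shift y))
  have hxy : x 0 = y 0 := by
    by_contra hne
    exact (S.sep _ _ hne).ne_of_mem hx hy h
  rw [hxy] at h
  exact ⟨hxy, S.injOn_Y _ (S.X_subset_Ioo (S.Phi_mem_X _)) (S.X_subset_Ioo (S.Phi_mem_X _)) h⟩

lemma Phi_injective : Function.Injective S.Φ := by
  suffices ∀ n x y, S.Φ x = S.Φ y → x n = y n from fun x y h => funext fun n => this n x y h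
  intro n
  induction n with
  | zero => exact fun x y h => (S.head_eq_and_Phi_shift_eq h).1
  | succ n ih => exact fun x y h => ih _ _ (S.head_eq_and_Phi_shift_eq h).2

lemma codeOf_Phi (x : ℕ → Fin (S.d + 1)) : S.codeOf (S.Φ x) = x :=
  Function.leftInverse_invFun S.Phi_injective x

lemma geom_Phi (x : ℕ → Fin (S.d + 1)) :
    S.geom (S.Φ x) = Real.log |deriv (S.f (x 0)) (S.Φ (S.shift x))| := by
  rw [geom, codeOf_Phi]

lemma birk_succ (g : ℝ → ℝ) (n : ℕ) (x : ℕ → Fin (S.d + 1)) :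
    S.birk g (n + 1) x = g (S.Φ x) + S.birk g n (S.shift x) := by
  rw [birk, Finset.sum_range_succ', birk, add_comm]
  rfl

lemma continuous_Phi : Continuous S.Φ := by
  refine continuous_iff_continuousAt.2 fun x => Metric.tendsto_nhds.2 fun e he => ?_
  obtain ⟨n, hn⟩ := (S.tendsto_r_pow_mul_sub_nhds_zero.eventually (gt_mem_nhds he)).exists
  have hU : (Finset.range n : Set ℕ).pi (fun k => {x k}) ∈ 𝓝 x :=
    (isOpen_set_pi (Finset.finite_toSet _) fun _ _ => isOpen_discrete _).mem_nhds
      fun _ _ => rfl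
  filter_upwards [hU] with y hy
  have hcode : S.code y n = S.code x n :=
    List.map_congr_left fun k hk => hy k (by simpa using hk)
  have hyK : S.Φ y ∈ S.cylImage x n := by rw [cylImage, ← hcode]; exact S.Phi_mem_cylImage y n
  exact (S.abs_sub_le_of_mem_cylImage hyK (S.Phi_mem_cylImage x n)).trans_lt hn

lemma exists_pos_le_abs_deriv : ∃ m : ℝ, 0 < m ∧ ∀ a, ∀ t ∈ S.X, m ≤ |deriv (S.f a) t| := by
  have hcont : ContinuousOn (fun p : Fin (S.d + 1) × ℝ => |deriv (S.f p.1) p.2|)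
      (univ ×ˢ S.X) :=
    continuousOn_prod_of_discrete_left.2 fun a =>
      (((S.holder a).continuousOn S.ε_pos).mono S.X_subset_Ioo).abs.mono fun _ ht => ht.2
  obtain ⟨⟨a₀, t₀⟩, ⟨-, ht₀⟩, hmin⟩ := (isCompact_univ.prod isCompact_Icc).exists_isMinOn
    ⟨(0, S.x₀), trivial, S.left_mem_X⟩ hcont
  exact ⟨_, abs_pos.2 (S.deriv_ne a₀ t₀ (S.X_subset_Ioo ht₀)),
    fun a t ht => hmin (mk_mem_prod trivial ht)⟩

lemma rpow_r_pow_mul (n : ℕ) {w : ℝ} (hw : 0 ≤ w) :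
    (S.r ^ n * w) ^ (S.ε : ℝ) = w ^ (S.ε : ℝ) * (S.r ^ (S.ε : ℝ)) ^ n := by
  rw [Real.mul_rpow (pow_nonneg S.r_pos.le n) hw, ← Real.rpow_natCast, ← Real.rpow_natCast,
    ← Real.rpow_mul S.r_pos.le, ← Real.rpow_mul S.r_pos.le, mul_comm, mul_comm (n : ℝ)]

section Distortion

variable {S} {m : ℝ} (hm : 0 < m) (hml : ∀ a, ∀ t ∈ S.X, m ≤ |deriv (S.f a) t|)
include hm hml

lemma abs_deriv_le_mul_exp (a : Fin (S.d + 1)) {p q c : ℝ} (hp : p ∈ S.X) (hq : q ∈ S.X)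
    (hpq : |p - q| ≤ c) :
    |deriv (S.f a) p| ≤ |deriv (S.f a) q| * Real.exp (S.hc / m * c ^ (S.ε : ℝ)) := by
  set t := (S.hc : ℝ) / m * c ^ (S.ε : ℝ)
  have hc : 0 ≤ c := (abs_nonneg _).trans hpq
  have hhol : |deriv (S.f a) p - deriv (S.f a) q| ≤ m * t := by
    rw [show m * t = S.hc * c ^ (S.ε : ℝ) by simp only [t]; field_simp]
    exact (S.holder a).dist_le_of_le (S.X_subset_Ioo hp) (S.X_subset_Ioo hq) hpq
  calc |deriv (S.f a) p| ≤ |deriv (S.f a) q| + m * t := by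
        linarith [abs_sub_abs_le_abs_sub (deriv (S.f a) p) (deriv (S.f a) q)]
    _ ≤ |deriv (S.f a) q| + |deriv (S.f a) q| * t := by gcongr; exact hml a q hq
    _ = |deriv (S.f a) q| * (1 + t) := by ring
    _ ≤ |deriv (S.f a) q| * Real.exp t := by gcongr; linarith [Real.add_one_le_exp t]

lemma abs_f_sub_le_mul_exp (a : Fin (S.d + 1)) {q c u v : ℝ} (hq : q ∈ S.X) (hu : u ∈ S.X)
    (hv : v ∈ S.X) (huq : |u - q| ≤ c) (hvq : |v - q| ≤ c) :
    |S.f a u - S.f a v| ≤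
      |deriv (S.f a) q| * Real.exp (S.hc / m * c ^ (S.ε : ℝ)) * |u - v| := by
  have hball : ∀ w ∈ uIcc u v, w ∈ S.X ∧ |w - q| ≤ c := by
    intro w hw
    have hu' := abs_sub_le_iff.1 huq
    have hv' := abs_sub_le_iff.1 hvq
    have h : w ∈ Icc (q - c) (q + c) :=
      uIcc_subset_Icc ⟨by linarith, by linarith⟩ ⟨by linarith, by linarith⟩ hw
    exact ⟨uIcc_subset_Icc hu hv hw, abs_sub_le_iff.2 ⟨by linarith [h.2], by linarith [h.1]⟩⟩
  have := convex_uIcc u v |>.norm_image_sub_le_of_norm_deriv_le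
    (fun w hw => S.diff_Y a w (S.X_subset_Ioo (hball w hw).1))
    (fun w hw => S.abs_deriv_le_mul_exp hm hml a (hball w hw).1 hq (hball w hw).2)
    right_mem_uIcc left_mem_uIcc
  simpa only [Real.norm_eq_abs] using this

/-- Besides `e^{φ}`, the `k`-th letter contributes the distortion factor `exp (D θ^(n-1-k))`,
`D = hc / m · |X|^ε`, `θ = r^ε`: it acts on an interval of level `n - 1 - k`, of length at most
`r^(n-1-k) |X|`, over which `log |f'|` varies by at most `D θ^(n-1-k)`. -/
lemma abs_fw_code_sub_le (n : ℕ) (x : ℕ → Fin (S.d + 1)) {s t : ℝ} (hs : s ∈ S.X)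
    (ht : t ∈ S.X) :
    |S.fw (S.code x n) s - S.fw (S.code x n) t| ≤
      Real.exp (S.hc / m * (S.x₁ - S.x₀) ^ (S.ε : ℝ) *
          ∑ k ∈ Finset.range n, (S.r ^ (S.ε : ℝ)) ^ k) *
        Real.exp (S.birk S.geom n x) * |s - t| := by
  induction n generalizing x with
  | zero => simp [code, fw, birk]
  | succ n ih =>
    set D : ℝ := S.hc / m * (S.x₁ - S.x₀) ^ (S.ε : ℝ)
    set θ : ℝ := S.r ^ (S.ε : ℝ)
    set ω := S.code (S.shift x) n
    have hsK : S.fw ω s ∈ S.cylImage (S.shift x) n := mem_image_of_mem _ hs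
    have htK : S.fw ω t ∈ S.cylImage (S.shift x) n := mem_image_of_mem _ ht
    have hqK := S.Phi_mem_cylImage (S.shift x) n
    have hletter := S.abs_f_sub_le_mul_exp hm hml (x 0) (S.Phi_mem_X _)
      (S.mapsTo_fw ω hs) (S.mapsTo_fw ω ht) (S.abs_sub_le_of_mem_cylImage hsK hqK)
      (S.abs_sub_le_of_mem_cylImage htK hqK)
    have hgeom : Real.exp (S.geom (S.Φ x)) = |deriv (S.f (x 0)) (S.Φ (S.shift x))| := by
      rw [geom_Phi, Real.exp_log (abs_pos.2 (S.deriv_ne _ _ (S.X_subset_Ioo (S.Phi_mem_X _))))]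
    rw [S.rpow_r_pow_mul n (sub_nonneg.2 S.x_lt.le), ← mul_assoc, ← hgeom] at hletter
    rw [code_cons, fw_cons, Function.comp_apply, Function.comp_apply]
    calc _ ≤ Real.exp (S.geom (S.Φ x)) * Real.exp (D * θ ^ n) * |S.fw ω s - S.fw ω t| :=
          hletter
      _ ≤ Real.exp (S.geom (S.Φ x)) * Real.exp (D * θ ^ n) *
            (Real.exp (D * ∑ k ∈ Finset.range n, θ ^ k) *
              Real.exp (S.birk S.geom n (S.shift x)) * |s - t|) := by gcongr; exact ih _
      _ = Real.exp (D * ∑ k ∈ Finset.range (n + 1), θ ^ k) *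
            Real.exp (S.birk S.geom (n + 1) x) * |s - t| := by
          rw [Finset.sum_range_succ, S.birk_succ, mul_add, Real.exp_add, Real.exp_add]
          ring

end Distortion

lemma exists_abs_fw_code_sub_le_mul_exp_birk : ∃ C : ℝ, 0 < C ∧
    ∀ n x, ∀ s ∈ S.X, ∀ t ∈ S.X,
      |S.fw (S.code x n) s - S.fw (S.code x n) t| ≤ C * Real.exp (S.birk S.geom n x) := by
  obtain ⟨m, hm, hml⟩ := S.exists_pos_le_abs_deriv
  set D : ℝ := S.hc / m * (S.x₁ - S.x₀) ^ (S.ε : ℝ)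
  set θ : ℝ := S.r ^ (S.ε : ℝ)
  have hD : 0 ≤ D :=
    mul_nonneg (div_nonneg S.hc.coe_nonneg hm.le) (Real.rpow_nonneg (sub_nonneg.2 S.x_lt.le) _)
  have hθ : 0 ≤ θ := Real.rpow_nonneg S.r_pos.le _
  have hθ1 : θ < 1 := Real.rpow_lt_one S.r_pos.le S.r_lt_one (by exact_mod_cast S.ε_pos)
  have hgeomSum (n : ℕ) : ∑ k ∈ Finset.range n, θ ^ k ≤ (1 - θ)⁻¹ := by
    have h := geom_sum_Ico_le_of_lt_one (m := 0) (n := n) hθ hθ1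
    rwa [← Finset.range_eq_Ico, pow_zero, one_div] at h
  refine ⟨Real.exp (D * (1 - θ)⁻¹) * (S.x₁ - S.x₀), mul_pos (Real.exp_pos _) (sub_pos.2 S.x_lt),
    fun n x s hs t ht => (S.abs_fw_code_sub_le hm hml n x hs ht).trans ?_⟩
  calc _ = Real.exp (D * ∑ k ∈ Finset.range n, θ ^ k) * |s - t| *
        Real.exp (S.birk S.geom n x) := by ring
    _ ≤ _ := by
      gcongr ?_ * ?_ * _
      · exact Real.exp_le_exp.2 (mul_le_mul_of_nonneg_left (hgeomSum n) hD)
      · exact S.abs_sub_le_of_mem_X hs ht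

lemma continuous_geom_Phi : Continuous fun x => S.geom (S.Φ x) := by
  simp_rw [geom_Phi]
  have hshift : Continuous fun x : ℕ → Fin (S.d + 1) => S.Φ (S.shift x) :=
    S.continuous_Phi.comp (continuous_pi fun i => continuous_apply (i + 1))
  have huncurry : Continuous fun p : Fin (S.d + 1) × (ℕ → Fin (S.d + 1)) =>
      Real.log |deriv (S.f p.1) (S.Φ (S.shift p.2))| :=
    continuous_prod_of_discrete_left.2 fun a =>
      ((((S.holder a).continuousOn S.ε_pos).mono S.X_subset_Ioo).abs.log fun t ht =>
        abs_ne_zero.2 (S.deriv_ne a t (S.X_subset_Ioo ht))).comp_continuous hshift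
        fun x => S.Phi_mem_X _
  exact huncurry.comp (f := fun x => (x 0, x)) (by fun_prop)

lemma exists_pos_le_sub_geom {α : ℝ} {ψ : ℝ → ℝ} (hψ : S.GoodPotential α ψ) :
    ∃ δ : ℝ, 0 < δ ∧ ∀ x, δ ≤ ψ (S.Φ x) - α * S.geom (S.Φ x) := by
  obtain ⟨⟨_, _, he, hhol⟩, -, -, hgt⟩ := hψ
  have hcont : Continuous fun x => ψ (S.Φ x) - α * S.geom (S.Φ x) :=
    ((hhol.continuousOn he).comp_continuous S.continuous_Phi S.Phi_mem_L).sub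
      (continuous_const.mul S.continuous_geom_Phi)
  obtain ⟨z, -, hz⟩ := isCompact_univ.exists_isMinOn univ_nonempty hcont.continuousOn
  exact ⟨_, sub_pos.2 (hgt _ (S.Phi_mem_L z)), fun x => hz (mem_univ x)⟩

lemma nat_mul_le_birk_sub {α δ : ℝ} {ψ : ℝ → ℝ}
    (hδ : ∀ x, δ ≤ ψ (S.Φ x) - α * S.geom (S.Φ x)) (n : ℕ) (x : ℕ → Fin (S.d + 1)) :
    n * δ ≤ S.birk ψ n x - α * S.birk S.geom n x := by
  rw [birk, birk, Finset.mul_sum, ← Finset.sum_sub_distrib]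
  simpa using Finset.card_nsmul_le_sum (Finset.range n) _ δ fun k _ => hδ fun j => x (j + k)

lemma exists_mem_cylImage_hquot_ge (ν : Measure ℝ) [IsFiniteMeasure ν] {ψ : ℝ → ℝ}
    {α c C δ : ℝ} (hgibbs : ∀ n x, c⁻¹ * Real.exp (S.birk ψ n x) ≤ ν.real (S.cyl (S.code x n)))
    (hc : 0 < c) (hC : 0 < C) (hdist : ∀ n x, ∀ s ∈ S.X, ∀ t ∈ S.X,
      |S.fw (S.code x n) s - S.fw (S.code x n) t| ≤ C * Real.exp (S.birk S.geom n x))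
    (hδ : ∀ x, δ ≤ ψ (S.Φ x) - α * S.geom (S.Φ x)) (hα : 0 ≤ α)
    (x : ℕ → Fin (S.d + 1)) (n : ℕ) :
    ∃ η ∈ S.cylImage x n, η ≠ S.Φ x ∧
      c⁻¹ / (2 * C ^ α) * Real.exp (n * δ) ≤ hquot (distFun ν) α (S.Φ x) η := by
  obtain ⟨η, hη, hne, hhalf⟩ :=
    exists_half_measureReal_le_abs_distFun_sub ν (S.Phi_mem_uIoo x n)
  have hmass : c⁻¹ * Real.exp (S.birk ψ n x) / 2 ≤ |distFun ν (S.Φ x) - distFun ν η| :=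
    le_trans (by gcongr; exact (hgibbs n x).trans (measureReal_mono (S.cyl_code_subset_uIoo x n)))
      hhalf
  obtain ⟨s, hs, rfl⟩ : ∃ s ∈ S.X, S.fw (S.code x n) s = η := by
    rcases hη with rfl | rfl
    exacts [⟨_, S.left_mem_X, rfl⟩, ⟨_, S.right_mem_X, rfl⟩]
  have hclose : |S.Φ x - S.fw (S.code x n) s| ≤ C * Real.exp (S.birk S.geom n x) := by
    rw [S.Phi_eq_fw_code x n]; exact hdist n x _ (S.Phi_mem_X _) s hs
  refine ⟨_, mem_image_of_mem _ hs, hne, le_trans ?_ (div_rpow_le_hquot hmass hne hclose hα)⟩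
  rw [Real.mul_rpow hC.le (Real.exp_pos _).le, ← Real.exp_mul]
  calc c⁻¹ / (2 * C ^ α) * Real.exp (n * δ)
      ≤ c⁻¹ / (2 * C ^ α) * Real.exp (S.birk ψ n x - α * S.birk S.geom n x) := by
        gcongr; exact S.nat_mul_le_birk_sub hδ n x
    _ = _ := by rw [Real.exp_sub, mul_comm (S.birk S.geom n x)]; field_simp

end CIFS

theorem limsup_hquot_eq_top_general (S : CIFS)
    (α : ℝ) (hα : 0 < α) (ψ : ℝ → ℝ) (hψ : S.GoodPotential α ψ)
    (ν : Measure ℝ) (hprob : IsProbabilityMeasure ν)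
    (hgibbs : S.IsGibbs ψ ν) :
    ∀ x : ℕ → Fin (S.d + 1), x ∉ S.Ecode →
      Filter.limsup (fun η => ENNReal.ofReal (hquot (distFun ν) α (S.Φ x) η))
        (nhdsWithin (S.Φ x) {S.Φ x}ᶜ) = ⊤ := by
  intro x _
  obtain ⟨δ, hδ, hψφ⟩ := S.exists_pos_le_sub_geom hψ
  obtain ⟨C, hC, hdist⟩ := S.exists_abs_fw_code_sub_le_mul_exp_birk
  obtain ⟨c, hc, hgibbs⟩ := hgibbs
  choose η hηK hηne hηq using
    S.exists_mem_cylImage_hquot_ge ν (fun n x => (hgibbs n x).1) (by linarith) hC hdist hψφ hα.le x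
  refine limsup_eq_top_of_tendsto
    (tendsto_nhdsWithin_iff.2 ⟨S.tendsto_of_mem_cylImage hηK, .of_forall hηne⟩) ?_
  refine ENNReal.tendsto_ofReal_atTop.comp (tendsto_atTop_mono hηq ?_)
  have hK : 0 < c⁻¹ / (2 * C ^ α) := by positivity
  exact (Real.tendsto_exp_atTop.comp
    (tendsto_natCast_atTop_atTop.atTop_mul_const hδ)).const_mul_atTop hK

/-- For every `ξ ∈ L*` the upper `α`-Hölder derivative of `F_ψ` at `ξ` is infinite. -/
theorem limsup_hquot_eq_top (S : CIFS) (hlab : S.Labeled)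
    (α : ℝ) (hα : 0 < α) (ψ : ℝ → ℝ) (hψ : S.GoodPotential α ψ)
    (ν : Measure ℝ) (hprob : IsProbabilityMeasure ν)
    (hsupp : ν S.Lᶜ = 0) (hgibbs : S.IsGibbs ψ ν) :
    ∀ x : ℕ → Fin (S.d + 1), x ∉ S.Ecode →
      Filter.limsup (fun η => ENNReal.ofReal (hquot (distFun ν) α (S.Φ x) η))
        (nhdsWithin (S.Φ x) {S.Φ x}ᶜ) = ⊤ :=
  limsup_hquot_eq_top_general S α hα ψ hψ ν hprob hgibbs
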